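/- Let d ≥ 2 and let a, b, c be unit vectors in R^d. Let r be a random vector distributed uniformly on the unit sphere in R^d, and define sgn(x) = 1 if x ≥ 0 and sgn(x) = −1 otherwise. Then the probability that sgn(⟨a, r⟩) = sgn(⟨c, r⟩) and sgn(⟨b, r⟩) ≠ sgn(⟨c, r⟩) equals ( θ(a,b) − θ(c,a) + θ(c,b) ) / (2π), where θ(x, y) = arccos(⟨x, y⟩) denotes the angle between unit vectors x and y. -/

import Mathlib

/-!
A uniformly random hyperplane through the origin separates two unit vectors `u`, `v` with
probability `θ(u, v) / π`. The hyperplane `r^⊥` separates `a` from `b` iff it separates exactly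
one of the pairs `(c, a)`, `(c, b)`, and the event of the theorem is "it separates `(c, b)` but
not `(c, a)`", so inclusion–exclusion gives the formula.

Since separation is invariant under positive scaling, its probability is a volume ratio in the
unit ball. Take an orthonormal basis whose first two vectors `e₀`, `e₁` bisect `u` and `v`:
`u = cos ψ • e₀ - sin ψ • e₁`, `v = cos ψ • e₀ + sin ψ • e₁` with `ψ = θ / 2`. Separation then
depends only on the polar angle `φ` of the first two coordinates: it holds iff `cos (φ + ψ)` and
`cos (φ - ψ)` have different signs, i.e. on two arcs of total length `2θ`. Polar coordinates in
the plane and Fubini over the remaining coordinates turn this into the fraction `2θ / 2π` of the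
volume of the ball.
-/

open MeasureTheory Metric

/-- `sgn x = 1` if `x ≥ 0` and `sgn x = -1` otherwise. -/
noncomputable def sgn (x : ℝ) : ℝ := if 0 ≤ x then 1 else -1

/-- The angle `θ(x, y) = arccos ⟨x, y⟩` between unit vectors of `ℝ^d`. -/
noncomputable def angleOf {d : ℕ} (x y : EuclideanSpace ℝ (Fin d)) : ℝ :=
  Real.arccos (inner ℝ x y : ℝ)

/-- The uniform (normalized surface) probability measure on the unit sphere of `ℝ^d`,
obtained by normalizing the surface measure induced by the Lebesgue measure. -/
noncomputable def uniformSphere (d : ℕ) :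
    Measure (sphere (0 : EuclideanSpace ℝ (Fin d)) 1) :=
  ((volume : Measure (EuclideanSpace ℝ (Fin d))).toSphere Set.univ)⁻¹ •
    (volume : Measure (EuclideanSpace ℝ (Fin d))).toSphere

open Real Set
open scoped Pointwise InnerProductSpace ENNReal

theorem sgn_eq_sgn_iff (p q : ℝ) : sgn p = sgn q ↔ (0 ≤ p ↔ 0 ≤ q) := by
  unfold sgn
  split_ifs <;> norm_num <;> tauto

theorem measurableSet_not_nonneg_iff_nonneg {α : Type*} [MeasurableSpace α] {f g : α → ℝ}
    (hf : Measurable f) (hg : Measurable g) : MeasurableSet {a | ¬(0 ≤ f a ↔ 0 ≤ g a)} :=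
  measurableSet_setOfPred.2 ((measurableSet_setOfPred.1 (measurableSet_le measurable_const hf)).iff
    (measurableSet_setOfPred.1 (measurableSet_le measurable_const hg))).not

theorem MeasureTheory.measureReal_sdiff_eq_symmDiff {α : Type*} [MeasurableSpace α]
    {μ : Measure α} [IsFiniteMeasure μ] {X Y : Set α} (hX : MeasurableSet X)
    (hY : MeasurableSet Y) :
    μ.real (Y \ X) = (μ.real (symmDiff X Y) - μ.real X + μ.real Y) / 2 := by
  have hsymm := measureReal_union (μ := μ) disjoint_sdiff_sdiff (hY.diff hX)
  have hX' := measureReal_inter_add_sdiff (μ := μ) (s := X) hY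
  have hY' := measureReal_inter_add_sdiff (μ := μ) (s := Y) hX
  rw [inter_comm] at hY'
  rw [Set.symmDiff_def, hsymm]
  linarith

namespace Complex

theorem arg_mem_Ioo_of_mem_slitPlane {w : ℂ} (hw : w ∈ slitPlane) : arg w ∈ Ioo (-π) π :=
  ⟨neg_pi_lt_arg w, (arg_le_pi w).lt_of_ne (mem_slitPlane_iff_arg.1 hw).1⟩

theorem volume_arg_mem_and_sq_norm_lt {B : Set ℝ} (hB : MeasurableSet B)
    (hBsub : B ⊆ Ioo (-π) π) (t : ℝ) :
    volume {w : ℂ | arg w ∈ B ∧ ‖w‖ ^ 2 < t} = volume B * ENNReal.ofReal (t / 2) := by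
  set S := {w : ℂ | arg w ∈ B ∧ ‖w‖ ^ 2 < t}
  have hS : MeasurableSet S := (measurable_arg hB).inter
    (measurableSet_lt (continuous_norm.measurable.pow_const 2) measurable_const)
  have hpolar : ∀ p ∈ Complex.polarCoord.target,
      ENNReal.ofReal p.1 • S.indicator 1 (Complex.polarCoord.symm p) =
        (Ioo 0 √t ×ˢ B).indicator (fun q => ENNReal.ofReal q.1) p := by
    rintro ⟨r, φ⟩ ⟨hr, hφ⟩
    have harg : arg (Complex.polarCoord.symm (r, φ)) = φ := by
      simpa [← ofReal_cos, ← ofReal_sin] using arg_mul_cos_add_sin_mul_I hr ⟨hφ.1, hφ.2.le⟩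
    have hnorm : ‖Complex.polarCoord.symm (r, φ)‖ = r := by
      rw [norm_polarCoord_symm, abs_of_pos hr]
    have hiff : Complex.polarCoord.symm (r, φ) ∈ S ↔ (r, φ) ∈ Ioo 0 √t ×ˢ B := by
      simp only [S, mem_ofPred_eq, harg, hnorm, mem_prod, mem_Ioo, hr.out, true_and,
        Real.lt_sqrt hr.out.le]
      exact and_comm
    by_cases h : (r, φ) ∈ Ioo 0 √t ×ˢ B
    · rw [indicator_of_mem h, indicator_of_mem (hiff.2 h), Pi.one_apply, smul_eq_mul, mul_one]
    · rw [indicator_of_notMem h, indicator_of_notMem (mt hiff.1 h), smul_zero]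
  have hsub : Ioo 0 √t ×ˢ B ⊆ Complex.polarCoord.target :=
    prod_mono Ioo_subset_Ioi_self hBsub
  calc volume S = ∫⁻ w, S.indicator 1 w := (lintegral_indicator_one hS).symm
    _ = ∫⁻ p in Complex.polarCoord.target,
          (Ioo 0 √t ×ˢ B).indicator (fun q => ENNReal.ofReal q.1) p := by
      rw [← Complex.lintegral_comp_polarCoord_symm]
      exact setLIntegral_congr_fun Complex.polarCoord.open_target.measurableSet hpolar
    _ = ∫⁻ p in Ioo 0 √t ×ˢ B, ENNReal.ofReal p.1 := by
      rw [setLIntegral_indicator (measurableSet_Ioo.prod hB), inter_eq_left.2 hsub]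
    _ = (∫⁻ r in Ioo 0 √t, ENNReal.ofReal r) * volume B := by
      rw [Measure.volume_eq_prod, ← Measure.prod_restrict]
      simpa using lintegral_prod_mul (f := fun r : ℝ => ENNReal.ofReal r) (g := fun _ : ℝ => 1)
        (μ := volume.restrict (Ioo 0 √t)) (ν := volume.restrict B) (by fun_prop) (by fun_prop)
    _ = volume B * ENNReal.ofReal (t / 2) := by
      rw [mul_comm, ← ofReal_integral_eq_lintegral_ofReal (f := fun r => r)
        (continuous_id.integrableOn_Icc.mono_set Ioo_subset_Icc_self)
        (ae_restrict_of_forall_mem (s := Ioo 0 √t) measurableSet_Ioo fun r hr => hr.1.le),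
        ← integral_Ioc_eq_integral_Ioo, ← intervalIntegral.integral_of_le (sqrt_nonneg t),
        integral_id, Real.sq_sqrt']
      rcases le_total t 0 with ht | ht
      · simp [max_eq_right ht, ENNReal.ofReal_eq_zero.2 (by linarith : t / 2 ≤ 0)]
      · rw [max_eq_left ht]; ring_nf

theorem ae_mem_slitPlane : ∀ᵐ w : ℂ, w ∈ slitPlane := by
  have hline : volume (measurableEquivRealProd ⁻¹' (univ ×ˢ {0})) = 0 := by
    rw [volume_preserving_equiv_real_prod.measure_preimage
      (MeasurableSet.univ.prod (measurableSet_singleton 0)).nullMeasurableSet,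
      Measure.volume_eq_prod, Measure.prod_prod, Real.volume_singleton, mul_zero]
  refine measure_mono_null (fun w hw => ?_) hline
  exact ⟨trivial, of_not_not fun him => hw (Or.inr him)⟩

theorem volume_cone_inter_sq_norm_lt {C : Set ℂ} {B : Set ℝ} (hB : MeasurableSet B)
    (hBsub : B ⊆ Ioo (-π) π) (hC : ∀ w ∈ slitPlane, w ∈ C ↔ arg w ∈ B) (t : ℝ) :
    volume {w : ℂ | w ∈ C ∧ ‖w‖ ^ 2 < t} = volume B * ENNReal.ofReal (t / 2) := by
  rw [← volume_arg_mem_and_sq_norm_lt hB hBsub t]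
  refine measure_congr (Filter.eventuallyEq_set.2 ?_)
  filter_upwards [ae_mem_slitPlane] with w hw
  simp only [hC w hw]

theorem volume_cone_prod {Z : Type*} [MeasureSpace Z] [SFinite (volume : Measure Z)]
    {C : Set ℂ} {B : Set ℝ} (hCm : MeasurableSet C) (hB : MeasurableSet B)
    (hBsub : B ⊆ Ioo (-π) π) (hC : ∀ w ∈ slitPlane, w ∈ C ↔ arg w ∈ B)
    {g : Z → ℝ} (hg : Measurable g) :
    volume {p : ℂ × Z | p.1 ∈ C ∧ ‖p.1‖ ^ 2 + g p.2 < 1} =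
      volume B * ∫⁻ z, ENNReal.ofReal ((1 - g z) / 2) := by
  have hm : MeasurableSet {p : ℂ × Z | p.1 ∈ C ∧ ‖p.1‖ ^ 2 + g p.2 < 1} :=
    (measurable_fst hCm).inter
      (measurableSet_lt (f := fun p : ℂ × Z => ‖p.1‖ ^ 2 + g p.2) (by fun_prop) measurable_const)
  rw [Measure.volume_eq_prod, Measure.prod_apply_symm hm,
    ← lintegral_const_mul _ (by fun_prop)]
  refine lintegral_congr fun z => ?_
  rw [← volume_cone_inter_sq_norm_lt hB hBsub hC]
  simp only [preimage_ofPred_eq, lt_sub_iff_add_lt]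

end Complex

theorem Real.cos_nonneg_iff_abs_le {x : ℝ} (hx : |x| < π + π / 2) : 0 ≤ cos x ↔ |x| ≤ π / 2 := by
  rw [← cos_abs]
  refine ⟨fun h => ?_, fun h => cos_nonneg_of_mem_Icc ⟨by linarith [abs_nonneg x], h⟩⟩
  by_contra! hlt
  exact (cos_neg_of_pi_div_two_lt_of_lt hlt hx).not_ge h

theorem Real.volume_lune {ψ : ℝ} (h0 : 0 ≤ ψ) (h1 : ψ ≤ π / 2) :
    volume {φ ∈ Ioo (-π) π | ¬(0 ≤ cos (φ + ψ) ↔ 0 ≤ cos (φ - ψ))} = ENNReal.ofReal (4 * ψ) := by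
  have hL : {φ ∈ Ioo (-π) π | ¬(0 ≤ cos (φ + ψ) ↔ 0 ≤ cos (φ - ψ))} =
      {φ ∈ Ioo (-π) π | ¬(|φ + ψ| ≤ π / 2 ↔ |φ - ψ| ≤ π / 2)} := by
    ext φ
    simp only [mem_ofPred_eq, mem_Ioo]
    refine and_congr_right fun hφ => ?_
    rw [cos_nonneg_iff_abs_le (abs_lt.2 ⟨by linarith, by linarith⟩),
      cos_nonneg_iff_abs_le (abs_lt.2 ⟨by linarith, by linarith⟩)]
  have hlower : Ioo (-(π / 2) - ψ) (-(π / 2) + ψ) ∪ Ioo (π / 2 - ψ) (π / 2 + ψ) ⊆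
      {φ ∈ Ioo (-π) π | ¬(|φ + ψ| ≤ π / 2 ↔ |φ - ψ| ≤ π / 2)} := by
    rintro φ (⟨ha, hb⟩ | ⟨ha, hb⟩) <;> refine ⟨⟨by linarith, by linarith⟩, ?_⟩ <;>
      simp only [abs_le] <;> grind
  have hupper : {φ ∈ Ioo (-π) π | ¬(|φ + ψ| ≤ π / 2 ↔ |φ - ψ| ≤ π / 2)} ⊆
      Icc (-(π / 2) - ψ) (-(π / 2) + ψ) ∪ Icc (π / 2 - ψ) (π / 2 + ψ) := by
    rintro φ ⟨⟨ha, hb⟩, h⟩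
    simp only [abs_le] at h
    simp only [mem_union, mem_Icc]
    grind
  have hdisj : Disjoint (Ioo (-(π / 2) - ψ) (-(π / 2) + ψ)) (Ioo (π / 2 - ψ) (π / 2 + ψ)) :=
    disjoint_left.2 fun _ h h' => by linarith [h.2, h'.1]
  rw [hL]
  refine le_antisymm ((measure_mono hupper).trans ((measure_union_le _ _).trans ?_))
    (le_of_eq_of_le ?_ (measure_mono hlower))
  · rw [Real.volume_Icc, Real.volume_Icc, ← ENNReal.ofReal_add (by linarith) (by linarith)]
    ring_nf; rfl
  · rw [measure_union hdisj measurableSet_Ioo, Real.volume_Ioo, Real.volume_Ioo,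
      ← ENNReal.ofReal_add (by linarith) (by linarith)]
    ring_nf

section InnerProductSpace

variable {E : Type*} [NormedAddCommGroup E] [InnerProductSpace ℝ E]

open Module
open Complex (slitPlane arg)

theorem OrthonormalBasis.norm_sq_eq_complex_add {κ : Type*} [Fintype κ]
    (b : OrthonormalBasis (Fin 2 ⊕ κ) ℝ E) (x : E) :
    ‖x‖ ^ 2 = ‖(⟨b.repr x (.inl 0), b.repr x (.inl 1)⟩ : ℂ)‖ ^ 2 + ∑ j, b.repr x (.inr j) ^ 2 := by
  rw [← b.repr.norm_map, EuclideanSpace.real_norm_sq_eq, Fintype.sum_sum_type, Fin.sum_univ_two,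
    Complex.sq_norm, Complex.normSq_mk]
  ring

theorem Ioo_smul_image_coe_sphere_setOf {P : E → Prop}
    (hP : ∀ x : E, ∀ t : ℝ, 0 < t → (P (t • x) ↔ P x)) :
    Ioo (0 : ℝ) 1 • ((↑) '' {r : sphere (0 : E) 1 | P r} : Set E) =
      {x : E | ‖x‖ < 1 ∧ P x} \ {0} := by
  ext x
  constructor
  · rintro ⟨t, ht, _, ⟨r, hr, rfl⟩, rfl⟩
    have hr1 : ‖(r : E)‖ = 1 := norm_eq_of_mem_sphere r
    refine ⟨⟨?_, (hP _ _ ht.1).2 hr⟩, ?_⟩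
    · rw [norm_smul, hr1, Real.norm_of_nonneg ht.1.le, mul_one]; exact ht.2
    · simp [ht.1.ne', ← norm_ne_zero_iff, hr1]
  · rintro ⟨⟨hx1, hPx⟩, hx0⟩
    have hpos : 0 < ‖x‖ := norm_pos_iff.2 hx0
    refine ⟨‖x‖, ⟨hpos, hx1⟩, ‖x‖⁻¹ • x, ⟨⟨_, ?_⟩, (hP _ _ (inv_pos.2 hpos)).2 hPx, rfl⟩, ?_⟩
    · simp [norm_smul, hpos.ne']
    · simp [smul_smul, hpos.ne']

/-- The directions `r` whose hyperplane `r^⊥` separates `u` from `v`, a point of `r^⊥` counting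
on the nonnegative side as in `sgn`. -/
def separatingDirections (u v : E) : Set (sphere (0 : E) 1) :=
  {r | ¬(0 ≤ ⟪u, (r : E)⟫_ℝ ↔ 0 ≤ ⟪v, (r : E)⟫_ℝ)}

theorem separatingDirections_eq_symmDiff (a b c : E) :
    separatingDirections a b =
      symmDiff (separatingDirections c a) (separatingDirections c b) := by
  ext r
  simp only [separatingDirections, mem_symmDiff, mem_ofPred_eq]
  tauto

variable [FiniteDimensional ℝ E]

theorem exists_orthonormalBasis_sum_smul {ι : Type*} [Fintype ι]
    (hι : Fintype.card ι ≤ finrank ℝ E) {w : ι → E}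
    (hw : Pairwise fun i j => ⟪w i, w j⟫_ℝ = 0) :
    ∃ b : OrthonormalBasis (ι ⊕ Fin (finrank ℝ E - Fintype.card ι)) ℝ E,
      ∀ i, w i = ‖w i‖ • b (.inl i) := by
  classical
  set v : ι ⊕ Fin (finrank ℝ E - Fintype.card ι) → E := Sum.elim (fun i => ‖w i‖⁻¹ • w i) 0
  set s : Set (ι ⊕ Fin (finrank ℝ E - Fintype.card ι)) := Sum.inl '' {i | w i ≠ 0}
  have hv : Orthonormal ℝ (s.domRestrict v) := by
    rw [orthonormal_iff_ite]
    rintro ⟨_, i, hi, rfl⟩ ⟨_, j, hj, rfl⟩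
    simp only [domRestrict_apply, v, Sum.elim_inl, real_inner_smul_left, real_inner_smul_right]
    by_cases hij : i = j
    · subst hij
      rw [if_pos rfl, real_inner_self_eq_norm_sq]
      field_simp [norm_ne_zero_iff.2 hi]
    · rw [if_neg fun h => hij (Sum.inl_injective (congrArg Subtype.val h)), hw hij, mul_zero,
        mul_zero]
  obtain ⟨b, hb⟩ := hv.exists_orthonormalBasis_extension_of_card_eq (by simp; omega)
  refine ⟨b, fun i => ?_⟩
  by_cases hi : w i = 0
  · simp [hi]
  · rw [hb _ (mem_image_of_mem _ hi)]
    simp [v, smul_smul, norm_ne_zero_iff.2 hi]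

theorem exists_orthonormalBasis_half_angle (hE : 2 ≤ finrank ℝ E) {u v : E} (hu : ‖u‖ = 1)
    (hv : ‖v‖ = 1) :
    ∃ (n : ℕ) (b : OrthonormalBasis (Fin 2 ⊕ Fin n) ℝ E),
      u = cos (arccos ⟪u, v⟫_ℝ / 2) • b (.inl 0) - sin (arccos ⟪u, v⟫_ℝ / 2) • b (.inl 1) ∧
      v = cos (arccos ⟪u, v⟫_ℝ / 2) • b (.inl 0) + sin (arccos ⟪u, v⟫_ℝ / 2) • b (.inl 1) := by
  set ψ := arccos ⟪u, v⟫_ℝ / 2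
  have hψ0 : 0 ≤ ψ := div_nonneg (arccos_nonneg _) zero_le_two
  have hψ1 : ψ ≤ π / 2 := div_le_div_of_nonneg_right (arccos_le_pi _) zero_le_two
  have hinner := abs_le.1 ((abs_real_inner_le_norm u v).trans_eq (by rw [hu, hv, one_mul]))
  have hcos2 : cos (2 * ψ) = ⟪u, v⟫_ℝ := by
    rw [mul_div_cancel₀ _ two_ne_zero, cos_arccos hinner.1 hinner.2]
  have hcos : ‖u + v‖ = 2 * cos ψ := by
    rw [← sq_eq_sq₀ (norm_nonneg _)
        (by have := cos_nonneg_of_mem_Icc ⟨by linarith, hψ1⟩; positivity),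
      norm_add_sq_real, hu, hv, mul_pow, cos_sq ψ, hcos2]
    ring
  have hsin : ‖v - u‖ = 2 * sin ψ := by
    rw [← sq_eq_sq₀ (norm_nonneg _)
        (by have := sin_nonneg_of_nonneg_of_le_pi hψ0 (by linarith); positivity),
      norm_sub_sq_real, hu, hv, mul_pow, sin_sq_eq_half_sub, hcos2, real_inner_comm]
    ring
  have horth : ⟪u + v, v - u⟫_ℝ = 0 := by
    rw [inner_add_left, inner_sub_right, inner_sub_right, real_inner_self_eq_norm_sq,
      real_inner_self_eq_norm_sq, hu, hv, real_inner_comm u v]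
    ring
  obtain ⟨b, hb⟩ := exists_orthonormalBasis_sum_smul (w := ![u + v, v - u]) (by simpa using hE)
    (by intro i j hij; fin_cases i <;> fin_cases j <;> simp_all [real_inner_comm (u + v)])
  have hsum := hb 0
  have hdiff := hb 1
  simp only [Matrix.cons_val_zero, Matrix.cons_val_one, hcos, hsin] at hsum hdiff
  refine ⟨_, b, ?_, ?_⟩
  · calc u = (1 / 2 : ℝ) • ((u + v) - (v - u)) := by module
      _ = _ := by rw [hsum, hdiff]; module
  · calc v = (1 / 2 : ℝ) • ((u + v) + (v - u)) := by module
      _ = _ := by rw [hsum, hdiff]; module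

variable [MeasurableSpace E] [BorelSpace E]

theorem measurableSet_separatingDirections (u v : E) :
    MeasurableSet (separatingDirections u v) :=
  measurableSet_not_nonneg_iff_nonneg (by fun_prop) (by fun_prop)

theorem OrthonormalBasis.measurePreserving_complex_prod {κ : Type*} [Fintype κ]
    (b : OrthonormalBasis (Fin 2 ⊕ κ) ℝ E) :
    MeasurePreserving (fun x => ((⟨b.repr x (.inl 0), b.repr x (.inl 1)⟩ : ℂ),
      fun j => b.repr x (.inr j))) := by
  have hplane := Complex.volume_preserving_equiv_real_prod.symm.comp
    (volume_preserving_finTwoArrow ℝ)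
  exact (hplane.prod (MeasurePreserving.id volume)).comp
    ((volume_measurePreserving_sumPiEquivProdPi fun _ => ℝ).comp
      ((EuclideanSpace.volume_preserving_symm_measurableEquiv_toLp _).comp
        b.measurePreserving_repr))

theorem OrthonormalBasis.volume_ball_cone_eq_mul_lintegral {κ : Type*} [Fintype κ]
    (b : OrthonormalBasis (Fin 2 ⊕ κ) ℝ E) {C : Set ℂ} {B : Set ℝ} (hCm : MeasurableSet C)
    (hB : MeasurableSet B) (hBsub : B ⊆ Ioo (-π) π) (hC : ∀ w ∈ slitPlane, w ∈ C ↔ arg w ∈ B) :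
    volume {x : E | ‖x‖ < 1 ∧ (⟨b.repr x (.inl 0), b.repr x (.inl 1)⟩ : ℂ) ∈ C} =
      volume B * ∫⁻ z : κ → ℝ, ENNReal.ofReal ((1 - ∑ j, z j ^ 2) / 2) := by
  have hm : MeasurableSet {p : ℂ × (κ → ℝ) | p.1 ∈ C ∧ ‖p.1‖ ^ 2 + ∑ j, p.2 j ^ 2 < 1} :=
    (measurable_fst hCm).inter (measurableSet_lt
      (f := fun p : ℂ × (κ → ℝ) => ‖p.1‖ ^ 2 + ∑ j, p.2 j ^ 2) (by fun_prop) measurable_const)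
  rw [← Complex.volume_cone_prod hCm hB hBsub hC (by fun_prop),
    ← b.measurePreserving_complex_prod.measure_preimage hm.nullMeasurableSet]
  congr 1 with x
  simp only [mem_ofPred_eq, mem_preimage, ← b.norm_sq_eq_complex_add,
    sq_lt_one_iff₀ (norm_nonneg x), and_comm]

theorem OrthonormalBasis.volume_ball_cone {κ : Type*} [Fintype κ]
    (b : OrthonormalBasis (Fin 2 ⊕ κ) ℝ E) {C : Set ℂ} {B : Set ℝ} (hCm : MeasurableSet C)
    (hB : MeasurableSet B) (hBsub : B ⊆ Ioo (-π) π) (hC : ∀ w ∈ slitPlane, w ∈ C ↔ arg w ∈ B) :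
    volume {x : E | ‖x‖ < 1 ∧ (⟨b.repr x (.inl 0), b.repr x (.inl 1)⟩ : ℂ) ∈ C} =
      volume B / ENNReal.ofReal (2 * π) * volume (ball (0 : E) 1) := by
  have hball : ball (0 : E) 1 =
      {x : E | ‖x‖ < 1 ∧ (⟨b.repr x (.inl 0), b.repr x (.inl 1)⟩ : ℂ) ∈ univ} := by
    ext x; simp
  have hfull : ∀ w ∈ slitPlane, w ∈ univ ↔ arg w ∈ Ioo (-π) π := fun _ hw =>
    iff_of_true trivial (Complex.arg_mem_Ioo_of_mem_slitPlane hw)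
  rw [hball, b.volume_ball_cone_eq_mul_lintegral MeasurableSet.univ measurableSet_Ioo subset_rfl
      hfull, b.volume_ball_cone_eq_mul_lintegral hCm hB hBsub hC,
    Real.volume_Ioo, sub_neg_eq_add, ← two_mul, ← mul_assoc,
    ENNReal.div_mul_cancel (by simp [pi_pos]) ENNReal.ofReal_ne_top]

theorem volume_ball_separated (hE : 2 ≤ finrank ℝ E) {u v : E} (hu : ‖u‖ = 1) (hv : ‖v‖ = 1) :
    volume {x : E | ‖x‖ < 1 ∧ ¬(0 ≤ ⟪u, x⟫_ℝ ↔ 0 ≤ ⟪v, x⟫_ℝ)} =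
      ENNReal.ofReal (arccos ⟪u, v⟫_ℝ / π) * volume (ball (0 : E) 1) := by
  obtain ⟨n, b, hu', hv'⟩ := exists_orthonormalBasis_half_angle hE hu hv
  set ψ := arccos ⟪u, v⟫_ℝ / 2
  set C : Set ℂ := {w | ¬(0 ≤ cos ψ * w.re - sin ψ * w.im ↔ 0 ≤ cos ψ * w.re + sin ψ * w.im)}
  set B : Set ℝ := {φ ∈ Ioo (-π) π | ¬(0 ≤ cos (φ + ψ) ↔ 0 ≤ cos (φ - ψ))}
  have hCm : MeasurableSet C := measurableSet_not_nonneg_iff_nonneg (by fun_prop) (by fun_prop)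
  have hB : MeasurableSet B := measurableSet_Ioo.inter
    (measurableSet_not_nonneg_iff_nonneg (by fun_prop) (by fun_prop))
  have hC : ∀ w ∈ slitPlane, w ∈ C ↔ arg w ∈ B := by
    intro w hw
    have hpos : 0 < ‖w‖ := norm_pos_iff.2 (Complex.slitPlane_ne_zero hw)
    have hminus : cos ψ * w.re - sin ψ * w.im = ‖w‖ * cos (arg w + ψ) := by
      rw [cos_add, ← Complex.norm_mul_cos_arg, ← Complex.norm_mul_sin_arg]; ring
    have hplus : cos ψ * w.re + sin ψ * w.im = ‖w‖ * cos (arg w - ψ) := by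
      rw [cos_sub, ← Complex.norm_mul_cos_arg, ← Complex.norm_mul_sin_arg]; ring
    simp only [C, B, mem_ofPred_eq, hminus, hplus, mul_nonneg_iff_of_pos_left hpos,
      Complex.arg_mem_Ioo_of_mem_slitPlane hw, true_and]
  have hset : {x : E | ‖x‖ < 1 ∧ ¬(0 ≤ ⟪u, x⟫_ℝ ↔ 0 ≤ ⟪v, x⟫_ℝ)} =
      {x : E | ‖x‖ < 1 ∧ (⟨b.repr x (.inl 0), b.repr x (.inl 1)⟩ : ℂ) ∈ C} := by
    ext x
    rw [hu', hv']
    simp [C, inner_add_left, inner_sub_left, real_inner_smul_left, b.repr_apply_apply]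
  rw [hset, b.volume_ball_cone hCm hB (fun _ h => h.1) hC,
    volume_lune (div_nonneg (arccos_nonneg _) zero_le_two)
      (div_le_div_of_nonneg_right (arccos_le_pi _) zero_le_two),
    ← ENNReal.ofReal_div_of_pos two_pi_pos]
  congr 2
  field_simp
  ring

theorem toSphere_setOf_eq [Nontrivial E] {P : E → Prop}
    (hP : ∀ x : E, ∀ t : ℝ, 0 < t → (P (t • x) ↔ P x)) (hm : MeasurableSet {x | P x}) :
    (volume : Measure E).toSphere {r | P r} = finrank ℝ E * volume {x : E | ‖x‖ < 1 ∧ P x} := by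
  have hm' : MeasurableSet {r : sphere (0 : E) 1 | P r} := measurable_subtype_coe hm
  rw [Measure.toSphere_apply' _ hm', Ioo_smul_image_coe_sphere_setOf hP,
    measure_sdiff_null (measure_singleton 0)]

end InnerProductSpace

instance (d : ℕ) : IsFiniteMeasure (uniformSphere d) := by
  unfold uniformSphere; infer_instance

theorem uniformSphere_setOf_eq {d : ℕ} (hd : 0 < d) {P : EuclideanSpace ℝ (Fin d) → Prop}
    (hP : ∀ x, ∀ t : ℝ, 0 < t → (P (t • x) ↔ P x)) (hm : MeasurableSet {x | P x}) :
    uniformSphere d {r | P r} =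
      volume {x | ‖x‖ < 1 ∧ P x} / volume (ball (0 : EuclideanSpace ℝ (Fin d)) 1) := by
  have : Nonempty (Fin d) := ⟨⟨0, hd⟩⟩
  rw [uniformSphere, Measure.smul_apply, smul_eq_mul, Measure.toSphere_apply_univ,
    toSphere_setOf_eq hP hm, ← ENNReal.div_eq_inv_mul, finrank_euclideanSpace_fin,
    ENNReal.mul_div_mul_left _ _ (by simp [hd.ne']) (ENNReal.natCast_ne_top d)]

theorem uniformSphere_real_separatingDirections {d : ℕ} (hd : 2 ≤ d)
    {u v : EuclideanSpace ℝ (Fin d)} (hu : ‖u‖ = 1) (hv : ‖v‖ = 1) :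
    (uniformSphere d).real (separatingDirections u v) = angleOf u v / π := by
  have hsign : ∀ (w x : EuclideanSpace ℝ (Fin d)) (t : ℝ), 0 < t →
      (0 ≤ ⟪w, t • x⟫_ℝ ↔ 0 ≤ ⟪w, x⟫_ℝ) := fun w x t ht => by
    rw [real_inner_smul_right, mul_nonneg_iff_of_pos_left ht]
  rw [measureReal_def, separatingDirections,
    uniformSphere_setOf_eq (by omega) (fun x t ht => by rw [hsign u x t ht, hsign v x t ht])
      (measurableSet_not_nonneg_iff_nonneg (by fun_prop) (by fun_prop)),
    volume_ball_separated (by simpa using hd) hu hv,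
    ENNReal.mul_div_cancel_right (measure_ball_pos _ _ one_pos).ne' measure_ball_lt_top.ne]
  exact ENNReal.toReal_ofReal (div_nonneg (arccos_nonneg _) pi_pos.le)

/-- For unit vectors `a, b, c` in `ℝ^d` (`d ≥ 2`) and `r` uniformly distributed on the
unit sphere, the probability that `sgn⟨a, r⟩ = sgn⟨c, r⟩` and `sgn⟨b, r⟩ ≠ sgn⟨c, r⟩`
equals `(θ(a,b) − θ(c,a) + θ(c,b)) / (2π)`. -/
theorem sphere_rounding_probability
    {d : ℕ} (hd : 2 ≤ d) (a b c : EuclideanSpace ℝ (Fin d))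
    (ha : ‖a‖ = 1) (hb : ‖b‖ = 1) (hc : ‖c‖ = 1) :
    uniformSphere d
        {r : sphere (0 : EuclideanSpace ℝ (Fin d)) 1 |
          sgn (inner ℝ a (r : EuclideanSpace ℝ (Fin d)) : ℝ) =
              sgn (inner ℝ c (r : EuclideanSpace ℝ (Fin d)) : ℝ) ∧
            sgn (inner ℝ b (r : EuclideanSpace ℝ (Fin d)) : ℝ) ≠
              sgn (inner ℝ c (r : EuclideanSpace ℝ (Fin d)) : ℝ)} =
      ENNReal.ofReal ((angleOf a b - angleOf c a + angleOf c b) / (2 * Real.pi)) := by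
  have htarget : {r : sphere (0 : EuclideanSpace ℝ (Fin d)) 1 |
      sgn ⟪a, (r : EuclideanSpace ℝ (Fin d))⟫_ℝ = sgn ⟪c, (r : EuclideanSpace ℝ (Fin d))⟫_ℝ ∧
        sgn ⟪b, (r : EuclideanSpace ℝ (Fin d))⟫_ℝ ≠ sgn ⟪c, (r : EuclideanSpace ℝ (Fin d))⟫_ℝ} =
      separatingDirections c b \ separatingDirections c a := by
    ext r
    simp only [separatingDirections, mem_sdiff, mem_ofPred_eq, ne_eq, sgn_eq_sgn_iff]
    tauto
  rw [htarget, ← ofReal_measureReal, measureReal_sdiff_eq_symmDiff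
      (measurableSet_separatingDirections c a) (measurableSet_separatingDirections c b),
    ← separatingDirections_eq_symmDiff, uniformSphere_real_separatingDirections hd ha hb,
    uniformSphere_real_separatingDirections hd hc ha,
    uniformSphere_real_separatingDirections hd hc hb]
  congr 1
  field_simp
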